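/- arXiv:1409.1141 — 2 statements merged into one kernel-verified Lean document; each statement's English description precedes it below -/
import Mathlib

section
/- Let (R,m,k) be a Noetherian local ring, M and N finitely generated R-modules with N of infinite projective dimension. If Tor_i^R(M,N) = 0 for some i > 0, then k is not a direct summand of any of the syzygy modules M_0, ..., M_{i-1} of M. -/
open CategoryTheory IsLocalRing TensorProduct

variable (R : Type) [CommRing R]

/-- Length of a module, as the Krull dimension of its submodule lattice. -/
noncomputable def len (M : Type) [AddCommGroup M] [Module R M] : ℕ :=
  ((Order.krullDim (Submodule R M)).unbotD 0).toNat

/-- Minimal number of generators. -/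
noncomputable def nu [IsLocalRing R] (M : Type) [AddCommGroup M] [Module R M] : ℕ :=
  len R (M ⧸ (maximalIdeal R • (⊤ : Submodule R M)))

/-- The invariant `γ(M) = λ(M)/ν(M) - 1`. -/
noncomputable def gam [IsLocalRing R] (M : Type) [AddCommGroup M] [Module R M] : ℚ :=
  (len R M : ℚ) / (nu R M) - 1

/-- `Tor_i^R(M, N)`. -/
noncomputable def torM (i : ℕ) (M N : Type) [AddCommGroup M] [Module R M]
    [AddCommGroup N] [Module R N] : ModuleCat.{0} R :=
  ((Tor (ModuleCat.{0} R) i).obj (ModuleCat.of R M)).obj (ModuleCat.of R N)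

/-- Betti numbers: `b_i(M) = dim_k Tor_i^R(k, M)`, computed as a length over `R`. -/
noncomputable def betti [IsLocalRing R] (M : Type) [AddCommGroup M] [Module R M] (i : ℕ) : ℕ :=
  len R (torM R i (ResidueField R) M)

/-- `N` is (isomorphic to) the `j`-th syzygy of `M` in a minimal free resolution. -/
noncomputable def IsMinSyzygy [IsLocalRing R] : ℕ → ModuleCat.{0} R → ModuleCat.{0} R → Prop
  | 0, M, N => Nonempty (N ≃ₗ[R] M)
  | (j+1), M, N => ∃ P : ModuleCat.{0} R, IsMinSyzygy j M P ∧
      ∃ (n : ℕ) (f : (Fin n → R) →ₗ[R] P), Function.Surjective f ∧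
        LinearMap.ker f ≤ maximalIdeal R • (⊤ : Submodule R (Fin n → R)) ∧
        Nonempty (N ≃ₗ[R] LinearMap.ker f)

/-- The socle of a module: elements killed by the maximal ideal. -/
noncomputable def socle [IsLocalRing R] (M : Type) [AddCommGroup M] [Module R M] :
    Submodule R M :=
  ⨅ a ∈ maximalIdeal R, LinearMap.ker (LinearMap.lsmul R M a)

/-- `k` is a direct summand of `M`. -/
def ResidueFieldSummand [IsLocalRing R] (M : Type) [AddCommGroup M] [Module R M] : Prop :=
  ∃ (f : ResidueField R →ₗ[R] M) (g : M →ₗ[R] ResidueField R), g.comp f = LinearMap.id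

/-- `N` has infinite projective dimension: no minimal syzygy of `N` is free. -/
def InfiniteProjDim [IsLocalRing R] (N : Type) [AddCommGroup N] [Module R N] : Prop :=
  ¬ ∃ (n : ℕ) (S : ModuleCat.{0} R), IsMinSyzygy R n (ModuleCat.of R N) S ∧ Module.Free R S

/-- `ω` is a dualizing (canonical) module of the Artinian local ring `R`. -/
def IsDualizing [IsLocalRing R] (ω : Type) [AddCommGroup ω] [Module R ω] : Prop :=
  Module.Finite R ω ∧ Module.Injective R ω ∧ len R ↥(socle R ω) = 1

/-!
Fix a minimal free resolution `F` of `N`, so that `Tor_n(X, N) = H_n(X ⊗ F)`. Minimality means that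
the differentials of `F` land in `m F`, hence `k ⊗ F` has zero differentials and
`Tor_n(k, N) ≅ k ⊗ F_n`; this is nonzero for every `n` because the syzygies of `N` never vanish.
On the other hand, the short exact sequences `0 → M_{j+1} → R^b → M_j → 0` shift vanishing of
`Tor` down one syzygy at a time, so `Tor_i(M, N) = 0` gives `Tor_{i-j}(M_j, N) = 0` for `j < i`.
If `k` were a retract of `M_j`, then `Tor_{i-j}(k, N)` would be a retract of zero.
-/

open Limits MonoidalCategory

universe u v

section DimensionShift

variable {A : Type u} [CommRing A] (K : ChainComplex (ModuleCat.{u} A) ℕ)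

abbrev tensorComplex (X : ModuleCat.{u} A) : ChainComplex (ModuleCat.{u} A) ℕ :=
  (((tensoringLeft _).obj X).mapHomologicalComplex _).obj K

abbrev tensorComplexMap {X Y : ModuleCat.{u} A} (f : X ⟶ Y) :
    tensorComplex K X ⟶ tensorComplex K Y :=
  (NatTrans.mapHomologicalComplex ((tensoringLeft _).map f) _).app K

lemma shortExact_tensorComplex [∀ n, Module.Flat A (K.X n)] {S : ShortComplex (ModuleCat.{u} A)}
    (hS : S.ShortExact) :
    (ShortComplex.mk (tensorComplexMap K S.f) (tensorComplexMap K S.g) (by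
      ext n : 1
      change S.f ▷ K.X n ≫ S.g ▷ K.X n = 0
      rw [← comp_whiskerRight, S.zero, MonoidalPreadditive.zero_whiskerRight])).ShortExact :=
  HomologicalComplex.shortExact_of_degreewise_shortExact _ fun n =>
    hS.map_of_exact (tensorRight (K.X n))

lemma isZero_homology_tensorComplex_of_flat (hK : ∀ n, K.ExactAt (n + 1))
    (F : ModuleCat.{u} A) [Module.Flat A F] (n : ℕ) :
    IsZero ((tensorComplex K F).homology (n + 1)) :=
  (HomologicalComplex.exactAt_iff_isZero_homology _ _).mp ((hK n).map (tensorLeft F))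

theorem isZero_tor_X₁_of_shortExact {S : ShortComplex (ModuleCat.{u} A)} (hS : S.ShortExact)
    [Module.Flat A S.X₂] (N : ModuleCat.{u} A) (n : ℕ)
    (h : IsZero (((Tor _ (n + 2)).obj S.X₃).obj N)) :
    IsZero (((Tor _ (n + 1)).obj S.X₁).obj N) := by
  let P := projectiveResolution N
  refine IsZero.of_iso ?_ (P.isoLeftDerivedObj _ (n + 1))
  refine ((shortExact_tensorComplex P.complex hS).homology_exact₁ (n + 2) (n + 1) rfl).isZero_X₂
    ?_ ?_
  · exact (h.of_iso (P.isoLeftDerivedObj _ (n + 2)).symm).eq_of_src _ _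
  · exact (isZero_homology_tensorComplex_of_flat _ P.complex_exactAt_succ S.X₂ n).eq_of_tgt _ _

end DimensionShift

noncomputable def CategoryTheory.ProjectiveResolution.leftDerivedObjIsoOfMapDEqZero
    {C D : Type*} [Category C] [Abelian C] [HasProjectiveResolutions C] [Category D] [Abelian D]
    {Z : C} (P : ProjectiveResolution Z) (F : C ⥤ D) [F.Additive]
    (hF : ∀ i j, F.map (P.complex.d i j) = 0) (n : ℕ) :
    (F.leftDerived n).obj Z ≅ F.obj (P.complex.X n) :=
  P.isoLeftDerivedObj F n ≪≫
    (((F.mapHomologicalComplex _).obj P.complex).isoHomologyπ _ n rfl (hF _ _)).symm ≪≫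
    ((F.mapHomologicalComplex _).obj P.complex).iCyclesIso n _ rfl (hF _ _)

lemma mem_smul_top_pi_of_forall_mem {A ι : Type*} [CommRing A] [Fintype ι] (I : Ideal A)
    {c : ι → A} (hc : ∀ i, c i ∈ I) : c ∈ I • (⊤ : Submodule A (ι → A)) := by
  classical
  rw [pi_eq_sum_univ c]
  exact Submodule.sum_mem _ fun i _ => Submodule.smul_mem_smul (hc i) Submodule.mem_top

section MinimalResolution

variable {A : Type u} [CommRing A] [IsLocalRing A]

lemma LinearMap.lTensor_residueField_eq_zero {M N : Type*} [AddCommGroup M] [AddCommGroup N]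
    [Module A M] [Module A N] (u : M →ₗ[A] N)
    (hu : LinearMap.range u ≤ maximalIdeal A • ⊤) :
    u.lTensor (ResidueField A) = 0 := by
  refine TensorProduct.ext' fun x y => ?_
  rw [LinearMap.lTensor_tmul, LinearMap.zero_apply]
  have hy : u y ∈ maximalIdeal A • (⊤ : Submodule A N) := hu ⟨y, rfl⟩
  generalize u y = z at hy
  refine Submodule.smul_induction_on hy (fun r hr n _ => ?_) fun a b ha hb => ?_
  · rw [TensorProduct.tmul_smul, TensorProduct.smul_tmul', Algebra.smul_def,
      ResidueField.algebraMap_eq, (residue_eq_zero_iff r).mpr hr, zero_mul,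
      TensorProduct.zero_tmul]
  · rw [TensorProduct.tmul_add, ha, hb, add_zero]

/-- Lifting a basis of `k ⊗ X` gives a surjection `A^n → X` whose kernel lies in `m A^n`. -/
theorem IsLocalRing.exists_surjective_ker_le_maximalIdeal_smul (X : Type v) [AddCommGroup X]
    [Module A X] [Module.Finite A X] :
    ∃ (n : ℕ) (f : (Fin n → A) →ₗ[A] X), Function.Surjective f ∧
      LinearMap.ker f ≤ maximalIdeal A • (⊤ : Submodule A (Fin n → A)) := by
  let b := Module.finBasis (ResidueField A) (ResidueField A ⊗[A] X)
  choose x hx using fun i =>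
    TensorProduct.mk_surjective A X (ResidueField A) residue_surjective (b i)
  refine ⟨_, Fintype.linearCombination A x, ?_,
    fun c hc => mem_smul_top_pi_of_forall_mem _ fun i => ?_⟩
  · rw [← LinearMap.range_eq_top, Fintype.range_linearCombination]
    exact span_eq_top_of_tmul_eq_basis x b hx
  · have h : ∑ j, c j • b j = 0 := by
      simpa [Fintype.linearCombination_apply, ← hx, tmul_sum, tmul_smul] using
        congrArg (TensorProduct.mk A (ResidueField A) X 1) hc
    simp_rw [← algebraMap_smul (ResidueField A) (c _)] at h
    exact (residue_eq_zero_iff _).mp (Fintype.linearIndependent_iff.mp b.linearIndependent _ h i)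

namespace IsLocalRing

variable (X : FGModuleCat.{v} A)

noncomputable def minimalCoverRank : ℕ :=
  (exists_surjective_ker_le_maximalIdeal_smul (A := A) X).choose

noncomputable def minimalCover : (Fin (minimalCoverRank X) → A) →ₗ[A] X :=
  (exists_surjective_ker_le_maximalIdeal_smul (A := A) X).choose_spec.choose

lemma minimalCover_surjective : Function.Surjective (minimalCover X) :=
  (exists_surjective_ker_le_maximalIdeal_smul (A := A) X).choose_spec.choose_spec.1

lemma ker_minimalCover_le : LinearMap.ker (minimalCover X) ≤ maximalIdeal A • ⊤ :=
  (exists_surjective_ker_le_maximalIdeal_smul (A := A) X).choose_spec.choose_spec.2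

variable [IsNoetherianRing A] (N : FGModuleCat.{u} A)

noncomputable def minimalSyzygy : ℕ → FGModuleCat.{u} A
  | 0 => N
  | n + 1 => FGModuleCat.of A (LinearMap.ker (minimalCover (minimalSyzygy n)))

abbrev minimalResolutionX (n : ℕ) : ModuleCat.{u} A :=
  ModuleCat.of A (Fin (minimalCoverRank (minimalSyzygy N n)) → A)

noncomputable def minimalResolutionD (n : ℕ) :
    minimalResolutionX N (n + 1) ⟶ minimalResolutionX N n :=
  ModuleCat.ofHom ((LinearMap.ker _).subtype ∘ₗ minimalCover (minimalSyzygy N (n + 1)))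

lemma range_minimalResolutionD (n : ℕ) :
    LinearMap.range (minimalResolutionD N n).hom =
      LinearMap.ker (minimalCover (minimalSyzygy N n)) :=
  (LinearMap.range_comp_of_range_eq_top _
    (LinearMap.range_eq_top.mpr (minimalCover_surjective _))).trans (Submodule.range_subtype _)

lemma ker_minimalResolutionD (n : ℕ) :
    LinearMap.ker (minimalResolutionD N n).hom =
      LinearMap.ker (minimalCover (minimalSyzygy N (n + 1))) :=
  LinearMap.ker_comp_of_ker_eq_bot _ (Submodule.ker_subtype _)

lemma exact_minimalResolutionD (n : ℕ) :
    Function.Exact (minimalResolutionD N (n + 1)) (minimalResolutionD N n) :=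
  LinearMap.exact_iff.mpr
    ((ker_minimalResolutionD N n).trans (range_minimalResolutionD N (n + 1)).symm)

noncomputable def minimalResolutionComplex : ChainComplex (ModuleCat.{u} A) ℕ :=
  ChainComplex.of (minimalResolutionX N) (minimalResolutionD N) fun n =>
    ModuleCat.hom_ext (LinearMap.ext (exact_minimalResolutionD N n).apply_apply_eq_zero)

lemma minimalResolutionComplex_d (n : ℕ) :
    (minimalResolutionComplex N).d (n + 1) n = minimalResolutionD N n :=
  ChainComplex.of_d _ _ _

noncomputable def minimalResolutionπ :
    minimalResolutionComplex N ⟶ (ChainComplex.single₀ (ModuleCat.{u} A)).obj N.obj :=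
  (ChainComplex.toSingle₀Equiv _ _).symm ⟨ModuleCat.ofHom (minimalCover N), by
    rw [minimalResolutionComplex_d]
    ext x
    exact (minimalCover (minimalSyzygy N 1) x).2⟩

lemma minimalResolutionComplex_exactAt_succ (n : ℕ) :
    (minimalResolutionComplex N).ExactAt (n + 1) := by
  rw [HomologicalComplex.exactAt_iff' _ (n + 2) (n + 1) n (by simp) (by simp),
    ShortComplex.ShortExact.moduleCat_exact_iff_function_exact]
  dsimp only [HomologicalComplex.sc', HomologicalComplex.shortComplexFunctor']
  rw [minimalResolutionComplex_d, minimalResolutionComplex_d]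
  exact exact_minimalResolutionD N n

lemma quasiIso_minimalResolutionπ : QuasiIso (minimalResolutionπ N) where
  quasiIsoAt
  | 0 => by
    rw [ChainComplex.quasiIsoAt₀_iff, ShortComplex.quasiIso_iff_of_zeros' _ rfl rfl rfl]
    refine ⟨?_, ?_⟩
    · rw [ShortComplex.moduleCat_exact_iff_range_eq_ker]
      exact range_minimalResolutionD N 0
    · exact (ModuleCat.epi_iff_surjective _).mpr (minimalCover_surjective N)
  | n + 1 => by
    rw [quasiIsoAt_iff_exactAt' (hL := ChainComplex.exactAt_succ_single_obj ..)]
    exact minimalResolutionComplex_exactAt_succ N n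

noncomputable def minimalResolution : ProjectiveResolution N.obj where
  complex := minimalResolutionComplex N
  projective _ := ModuleCat.projective_of_free (Pi.basisFun A _)
  π := minimalResolutionπ N
  quasiIso := quasiIso_minimalResolutionπ N

lemma range_minimalResolution_d_le (i j : ℕ) :
    LinearMap.range ((minimalResolution N).complex.d i j).hom ≤ maximalIdeal A • ⊤ := by
  rcases eq_or_ne (j + 1) i with rfl | hij
  · change LinearMap.range ((minimalResolutionComplex N).d (j + 1) j).hom ≤ _
    rw [minimalResolutionComplex_d]
    exact (range_minimalResolutionD N j).le.trans (ker_minimalCover_le _)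
  · rw [(minimalResolution N).complex.shape i j hij, ModuleCat.hom_zero, LinearMap.range_zero]
    exact bot_le

noncomputable def torResidueFieldIso (n : ℕ) :
    ((Tor _ n).obj (ModuleCat.of A (ResidueField A))).obj N.obj ≅
      ModuleCat.of A (ResidueField A) ⊗ minimalResolutionX N n :=
  (minimalResolution N).leftDerivedObjIsoOfMapDEqZero _ (fun i j => ModuleCat.hom_ext
    (LinearMap.lTensor_residueField_eq_zero _ (range_minimalResolution_d_le N i j))) n

end IsLocalRing

end MinimalResolution

section

variable {R} [IsLocalRing R]

lemma isMinSyzygy_minimalSyzygy [IsNoetherianRing R] (N : FGModuleCat.{0} R) (n : ℕ) :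
    IsMinSyzygy R n N.obj (minimalSyzygy N n).obj := by
  induction n with
  | zero => exact ⟨LinearEquiv.refl _ _⟩
  | succ n ih =>
    exact ⟨_, ih, _, minimalCover _, minimalCover_surjective _, ker_minimalCover_le _,
      ⟨LinearEquiv.refl _ _⟩⟩

theorem not_isZero_tor_residueField_of_infiniteProjDim [IsNoetherianRing R] {N : Type} [AddCommGroup N]
    [Module R N] [Module.Finite R N] (hN : InfiniteProjDim R N) (n : ℕ) :
    ¬ IsZero (((Tor _ n).obj (ModuleCat.of R (ResidueField R))).obj (ModuleCat.of R N)) := by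
  intro h
  let N' := FGModuleCat.of R N
  have : Subsingleton (ResidueField R ⊗[R] minimalResolutionX N' n) :=
    ModuleCat.subsingleton_of_isZero (h.of_iso (torResidueFieldIso N' n).symm)
  have : Subsingleton (minimalResolutionX N' n) := subsingleton_tensorProduct.mp this
  have : Subsingleton (minimalSyzygy N' n) := (minimalCover_surjective _).subsingleton
  exact hN ⟨n, _, isMinSyzygy_minimalSyzygy N' n, Module.Free.of_subsingleton R _⟩

theorem isZero_tor_of_isMinSyzygy {M S : ModuleCat.{0} R} (N : ModuleCat.{0} R) {j : ℕ}
    (hS : IsMinSyzygy R j M S) {n : ℕ} (hM : IsZero (((Tor _ (n + 1 + j)).obj M).obj N)) :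
    IsZero (((Tor _ (n + 1)).obj S).obj N) := by
  induction j generalizing S n with
  | zero =>
    obtain ⟨e⟩ := hS
    exact hM.of_iso (((Tor _ (n + 1)).mapIso e.toModuleIso).app N)
  | succ j ih =>
    obtain ⟨P, hP, _, f, hf, -, ⟨e⟩⟩ := hS
    have hPN : IsZero (((Tor _ (n + 1 + 1)).obj P).obj N) :=
      ih hP (by rwa [show n + 1 + 1 + j = n + 1 + (j + 1) by omega])
    exact (isZero_tor_X₁_of_shortExact (LinearMap.shortExact_shortComplexKer hf) N n hPN).of_iso
      (((Tor _ (n + 1)).mapIso e.toModuleIso).app N)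

end

theorem stmt1 [IsLocalRing R] [IsNoetherianRing R]
    (M N : Type) [AddCommGroup M] [Module R M] [AddCommGroup N] [Module R N]
    [Module.Finite R N]
    (hN : InfiniteProjDim R N)
    (i : ℕ) (htor : Subsingleton (torM R i M N)) :
    ∀ j < i, ∀ S : ModuleCat.{0} R, IsMinSyzygy R j (ModuleCat.of R M) S →
      ¬ ResidueFieldSummand R S := by
  rintro j hj S hS ⟨f, g, hgf⟩
  obtain ⟨n, rfl⟩ : ∃ n, i = n + 1 + j := ⟨i - j - 1, by omega⟩
  have hSN : IsZero (((Tor _ (n + 1)).obj S).obj (ModuleCat.of R N)) :=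
    isZero_tor_of_isMinSyzygy _ hS (ModuleCat.isZero_of_subsingleton (torM R _ M N))
  let hk : Retract (ModuleCat.of R (ResidueField R)) S :=
    ⟨ModuleCat.ofHom f, ModuleCat.ofHom g, by rw [← ModuleCat.ofHom_comp, hgf]; rfl⟩
  exact not_isZero_tor_residueField_of_infiniteProjDim hN (n + 1)
    (hSN.of_mono (hk.map ((Tor _ (n + 1)).flip.obj (ModuleCat.of R N))).i)
end

section
/- Let R be a commutative local ring and 0 → N →^φ R^n →^ψ M → 0 a short exact sequence of R-modules with M faithful. Then the induced map Λ^n_R(φ) : Λ^n_R(N) → Λ^n_R(R^n) ≅ R is zero. -/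
/-!
Every decomposable `n`-vector `φ v₁ ∧ ⋯ ∧ φ vₙ` of `⋀ⁿ Rⁿ ≅ R` is the determinant `d` of the
matrix with columns `φ vⱼ ∈ ker ψ`. By Cramer's rule `d • b` lies in the span of these columns
for every `b ∈ Rⁿ`, so `d` kills `ψ (Rⁿ) = M`, and `d = 0` because `M` is faithful.
-/

open CategoryTheory IsLocalRing TensorProduct

variable (R : Type) [CommRing R]

open ExteriorAlgebra

theorem AlternatingMap.apply_eq_det_smul {A M N ι : Type*} [CommRing A] [AddCommGroup M]
    [Module A M] [AddCommGroup N] [Module A N] [Fintype ι] [DecidableEq ι]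
    (e : Module.Basis ι A M) (f : M [⋀^ι]→ₗ[A] N) (v : ι → M) : f v = e.det v • f e := by
  suffices f = (LinearMap.toSpanSingleton A N (f e)).compAlternatingMap e.det by
    conv_lhs => rw [this]
    rfl
  refine Module.Basis.ext_alternating e fun i hi => ?_
  let σ : Equiv.Perm ι := Equiv.ofBijective i (Finite.injective_iff_bijective.1 hi)
  change f (e ∘ σ) = e.det (e ∘ σ) • f e
  rw [f.map_perm, e.det.map_perm, Module.Basis.det_self, smul_one_smul]

theorem Pi.basisFun_det_smul_mem_span {A ι : Type*} [CommRing A] [Fintype ι] [DecidableEq ι]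
    (w : ι → ι → A) (b : ι → A) :
    (Pi.basisFun A ι).det w • b ∈ Submodule.span A (Set.range w) := by
  let W : Matrix ι ι A := Matrix.of fun i j => w j i
  have hdet : (Pi.basisFun A ι).det w = W.det := by
    rw [Module.Basis.det_apply]
    rfl
  have hcramer : W.det • b = ∑ j, W.cramer b j • w j := by
    rw [← W.mulVec_cramer b]
    ext i
    simp [Matrix.mulVec, dotProduct, W, mul_comm]
  rw [hdet, hcramer]
  exact Submodule.sum_mem _ fun j _ => Submodule.smul_mem _ _ (Submodule.subset_span ⟨j, rfl⟩)

theorem Pi.basisFun_det_eq_zero_of_map_eq_zero {A M ι : Type*} [CommRing A] [AddCommGroup M]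
    [Module A M] [FaithfulSMul A M] [Fintype ι] [DecidableEq ι]
    (ψ : (ι → A) →ₗ[A] M) (hψ : Function.Surjective ψ) (w : ι → ι → A)
    (hw : ∀ j, ψ (w j) = 0) : (Pi.basisFun A ι).det w = 0 := by
  have hspan : Submodule.span A (Set.range w) ≤ LinearMap.ker ψ :=
    Submodule.span_le.2 (Set.range_subset_iff.2 hw)
  refine FaithfulSMul.eq_of_smul_eq_smul (α := M) fun m => ?_
  obtain ⟨b, rfl⟩ := hψ m
  rw [zero_smul, ← map_smul]
  exact hspan (Pi.basisFun_det_smul_mem_span w b)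

theorem stmt18
    (M N : Type) [AddCommGroup M] [Module R M] [AddCommGroup N] [Module R N]
    (n : ℕ)
    (φ : N →ₗ[R] (Fin n → R)) (ψ : (Fin n → R) →ₗ[R] M)
    (hψ : Function.Surjective ψ)
    (hexact : LinearMap.ker ψ = LinearMap.range φ)
    (hfaithful : FaithfulSMul R M) :
    ∀ x ∈ (⋀[R]^n N : Submodule R (ExteriorAlgebra R N)),
      ExteriorAlgebra.map φ x = 0 := by
  intro x hx
  rw [← ιMulti_span_fixedDegree] at hx
  refine (Submodule.span_le (p := LinearMap.ker (map φ).toLinearMap)).2 ?_ hx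
  rintro _ ⟨v, rfl⟩
  have hker : ∀ j, ψ (φ (v j)) = 0 := fun j =>
    LinearMap.mem_ker.1 (hexact ▸ LinearMap.mem_range_self φ (v j))
  have hdet : (Pi.basisFun R (Fin n)).det (φ ∘ v) = 0 :=
    Pi.basisFun_det_eq_zero_of_map_eq_zero ψ hψ (φ ∘ v) hker
  change map φ (ιMulti R n v) = 0
  rw [map_apply_ιMulti, (ιMulti R n).apply_eq_det_smul (Pi.basisFun R (Fin n)), hdet, zero_smul]
end
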